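/- Let l ≥ 3 and n = 2^l − 1. Then dil(W_n, XT_l) = l − 1: every bijection from the vertices of the wheel W_n to the vertices of the X-tree XT_l has some edge of W_n whose endpoint images are at distance at least l − 1 in XT_l, and there exists a bijection under which every edge of W_n maps to a pair of vertices at distance at most l − 1 in XT_l. -/

import Mathlib

/-
Lower bound: the hub is adjacent to every rim vertex, so its image `c` is at distance at most the
dilation from both the leftmost leaf `L = 2 ^ (l - 1)` and the rightmost leaf `R = 2 ^ l - 1`.
A potential changing by at most one along each X-tree edge shows `dist L R ≥ 2 l - 3`, hence
`2 · dilation ≥ 2 l - 3`.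

Upper bound: send the hub to the root and walk the rim through the levels in boustrophedon order.
Consecutive rim vertices then land on adjacent vertices, the hub edges have length at most the
depth `l - 1`, and the closing rim edge joins vertex `2` to a leaf, also at distance at most
`l - 1`.
-/

open SimpleGraph

/-- Wheel graph on `Fin n`: hub `0`, rim cycle `1, …, n-1`. -/
def wheelGraph (n : ℕ) : SimpleGraph (Fin n) where
  Adj x y := x ≠ y ∧ (x.val = 0 ∨ y.val = 0 ∨ y.val = x.val + 1 ∨ x.val = y.val + 1 ∨
    (x.val = 1 ∧ y.val = n - 1) ∨ (y.val = 1 ∧ x.val = n - 1))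
  symm := by constructor; rintro x y ⟨h1, h2⟩; exact ⟨h1.symm, by tauto⟩
  loopless := by constructor; rintro x ⟨h1, -⟩; exact h1 rfl

/-- Adjacency of X-tree labels: binary tree edges plus edges between consecutive
labels on the same level (the level of label `a` is `Nat.log 2 a + 1`). -/
def xtAdjLbl (a b : ℕ) : Prop :=
  (b = 2 * a ∨ b = 2 * a + 1 ∨ a = 2 * b ∨ a = 2 * b + 1) ∨
  (b = a + 1 ∧ Nat.log 2 a = Nat.log 2 b) ∨ (a = b + 1 ∧ Nat.log 2 a = Nat.log 2 b)

/-- The X-tree `XT_l` on `Fin (2^l - 1)`; vertex `x` has label `x+1`. -/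
def xTree (l : ℕ) : SimpleGraph (Fin (2 ^ l - 1)) where
  Adj x y := xtAdjLbl (x.val + 1) (y.val + 1)
  symm := by
    constructor
    rintro x y (h | ⟨h1, h2⟩ | ⟨h1, h2⟩)
    · left; tauto
    · right; right; exact ⟨h1, h2.symm⟩
    · right; left; exact ⟨h1, h2.symm⟩
  loopless := by
    constructor
    rintro x (h | ⟨h1, -⟩ | ⟨h1, -⟩) <;> omega

namespace SimpleGraph

variable {V : Type*} {G : SimpleGraph V} {φ : V → ℤ}

lemma Walk.sub_le_length (hφ : ∀ a b, G.Adj a b → φ b ≤ φ a + 1) {u v : V} :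
    ∀ p : G.Walk u v, φ v - φ u ≤ p.length
  | .nil => by simp
  | .cons h p => by
    have := hφ _ _ h
    have := p.sub_le_length hφ
    rw [Walk.length_cons]
    omega

lemma Reachable.sub_le_dist (hφ : ∀ a b, G.Adj a b → φ b ≤ φ a + 1) {u v : V}
    (h : G.Reachable u v) : φ v - φ u ≤ G.dist u v := by
  obtain ⟨p, hp⟩ := h.exists_walk_length_eq_dist
  exact hp ▸ p.sub_le_length hφ

end SimpleGraph

lemma two_pow_log_le_and_lt {n : ℕ} (hn : n ≠ 0) :
    2 ^ Nat.log 2 n ≤ n ∧ n < 2 * 2 ^ Nat.log 2 n :=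
  ⟨Nat.pow_log_le_self 2 hn,
    by simpa [pow_succ, mul_comm] using Nat.lt_pow_succ_log_self one_lt_two n⟩

lemma log_two_eq_log_div_two_add_one {n : ℕ} (hn : 2 ≤ n) :
    Nat.log 2 n = Nat.log 2 (n / 2) + 1 := by
  rw [Nat.log_div_base]
  have := Nat.log_pos one_lt_two hn
  omega

lemma div_two_pow_log {n : ℕ} (hn : n ≠ 0) : n / 2 ^ Nat.log 2 n = 1 := by
  have := two_pow_log_le_and_lt hn
  rw [Nat.div_eq_iff (by positivity)]
  omega

section XTree

variable {l : ℕ}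

lemma log_succ_val_lt (x : Fin (2 ^ l - 1)) : Nat.log 2 (x.val + 1) < l :=
  Nat.log_lt_of_lt_pow (by omega) (by omega)

lemma xTree_adj_of_succ_val_eq_div_two {x y : Fin (2 ^ l - 1)} (h : y.val + 1 = (x.val + 1) / 2) :
    (xTree l).Adj x y := by
  left
  omega

lemma xTree_exists_walk_of_succ_val_eq_div_two_pow (x : Fin (2 ^ l - 1)) :
    ∀ (k : ℕ) (y : Fin (2 ^ l - 1)), y.val + 1 = (x.val + 1) / 2 ^ k →
      ∃ p : (xTree l).Walk x y, p.length = k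
  | 0, y, h => by
    obtain rfl : x = y := Fin.ext (by simpa using h.symm)
    exact ⟨.nil, rfl⟩
  | k + 1, y, h => by
    have hdiv : (x.val + 1) / 2 ^ (k + 1) = (x.val + 1) / 2 ^ k / 2 := by
      rw [pow_succ, Nat.div_div_eq_div_mul]
    have hle : (x.val + 1) / 2 ^ k ≤ x.val + 1 := Nat.div_le_self _ _
    let z : Fin (2 ^ l - 1) := ⟨(x.val + 1) / 2 ^ k - 1, by omega⟩
    obtain ⟨p, hp⟩ :=
      xTree_exists_walk_of_succ_val_eq_div_two_pow x k z (by simp only [z]; omega)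
    have hzy : (xTree l).Adj z y := xTree_adj_of_succ_val_eq_div_two (by simp only [z]; omega)
    exact ⟨p.concat hzy, by rw [Walk.length_concat, hp]⟩

lemma xTree_exists_walk_to_root (x y : Fin (2 ^ l - 1)) (hy : y.val = 0) :
    ∃ p : (xTree l).Walk x y, p.length = Nat.log 2 (x.val + 1) :=
  xTree_exists_walk_of_succ_val_eq_div_two_pow x _ y (by rw [div_two_pow_log (by omega), hy])

lemma xTree_preconnected : (xTree l).Preconnected := fun x y => by
  let r : Fin (2 ^ l - 1) := ⟨0, x.pos⟩
  obtain ⟨p, -⟩ := xTree_exists_walk_to_root x r rfl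
  obtain ⟨q, -⟩ := xTree_exists_walk_to_root y r rfl
  exact p.reachable.trans q.reachable.symm

lemma xTree_dist_le_of_val_eq_zero (x y : Fin (2 ^ l - 1)) (hy : y.val = 0) :
    (xTree l).dist x y ≤ l - 1 := by
  obtain ⟨p, hp⟩ := xTree_exists_walk_to_root x y hy
  have := dist_le p
  have := log_succ_val_lt x
  omega

/- The ancestor `z` of `x` on the second level is labelled `2` (it is `y`) or `3`, a neighbour
of `y`. -/
lemma xTree_dist_le_of_val_eq_one (x y : Fin (2 ^ l - 1)) (hx : x.val ≠ 0) (hy : y.val = 1) :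
    (xTree l).dist x y ≤ l - 1 := by
  obtain ⟨h₁, h₂⟩ := two_pow_log_le_and_lt (n := x.val + 1) (by omega)
  have hm1 : 1 ≤ Nat.log 2 (x.val + 1) := Nat.log_pos one_lt_two (by omega)
  have hlt := log_succ_val_lt x
  set m := Nat.log 2 (x.val + 1)
  have hpow : 2 ^ m = 2 * 2 ^ (m - 1) := by rw [← pow_succ', Nat.sub_add_cancel hm1]
  have hq : 2 ≤ (x.val + 1) / 2 ^ (m - 1) ∧ (x.val + 1) / 2 ^ (m - 1) < 4 := by
    rw [Nat.le_div_iff_mul_le (by positivity), Nat.div_lt_iff_lt_mul (by positivity)]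
    omega
  have hle : (x.val + 1) / 2 ^ (m - 1) ≤ x.val + 1 := Nat.div_le_self _ _
  let z : Fin (2 ^ l - 1) := ⟨(x.val + 1) / 2 ^ (m - 1) - 1, by omega⟩
  obtain ⟨p, hp⟩ :=
    xTree_exists_walk_of_succ_val_eq_div_two_pow x (m - 1) z (by simp only [z]; omega)
  by_cases hz : z = y
  · rw [← hz]
    have := dist_le p
    omega
  · have hz2 : z.val = 2 := by
      have : z.val ≠ y.val := fun h => hz (Fin.ext h)
      simp only [z] at this ⊢
      omega
    have hzy : (xTree l).Adj z y := by
      change xtAdjLbl (z.val + 1) (y.val + 1)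
      rw [hz2, hy]
      exact .inr (.inr (by decide))
    have := dist_le (p.concat hzy)
    rw [Walk.length_concat] at this
    omega

end XTree

/- `offsetCost r` counts the numbers `2 ^ k` and `3 * 2 ^ k` that are at most `r`. Changing by at
most one along every edge, `xtPotential a + (l - 1)` is a lower bound for the distance in `XT_l`
from the leftmost leaf `2 ^ (l - 1)` to the label `a`, whose offset in its level is `r`. -/
def offsetCost (r : ℕ) : ℕ :=
  if r = 0 then 0 else 2 * Nat.log 2 r + if 3 * 2 ^ Nat.log 2 r ≤ 2 * r + 1 then 1 else 0

lemma offsetCost_of_ne_zero {r : ℕ} (hr : r ≠ 0) :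
    offsetCost r = 2 * Nat.log 2 r + if 3 * 2 ^ Nat.log 2 r ≤ 2 * r + 1 then 1 else 0 :=
  if_neg hr

lemma offsetCost_succ_mem_Icc (r : ℕ) :
    offsetCost (r + 1) ∈ Set.Icc (offsetCost r) (offsetCost r + 1) := by
  rcases Nat.eq_zero_or_pos r with rfl | hr
  · decide
  obtain ⟨h₁, h₂⟩ := two_pow_log_le_and_lt hr.ne'
  have hlog : Nat.log 2 (r + 1) = Nat.log 2 r ∨
      r + 1 = 2 * 2 ^ Nat.log 2 r ∧ Nat.log 2 (r + 1) = Nat.log 2 r + 1 := by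
    rcases Nat.lt_or_ge (r + 1) (2 * 2 ^ Nat.log 2 r) with h | h
    · exact .inl (Nat.log_eq_of_pow_le_of_lt_pow (by omega) (by rwa [pow_succ']))
    · refine .inr ⟨by omega, ?_⟩
      rw [show r + 1 = 2 ^ (Nat.log 2 r + 1) by rw [pow_succ']; omega, Nat.log_pow one_lt_two]
  rw [Set.mem_Icc, offsetCost_of_ne_zero hr.ne', offsetCost_of_ne_zero (by omega)]
  rcases hlog with hlog | ⟨hr1, hlog⟩
  · rw [hlog]
    split_ifs <;> omega
  · rw [hlog, pow_succ]
    split_ifs <;> omega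

lemma offsetCost_mem_Icc_div_two (n : ℕ) :
    offsetCost n ∈ Set.Icc (offsetCost (n / 2)) (offsetCost (n / 2) + 2) := by
  rcases Nat.lt_or_ge n 2 with hn | hn
  · interval_cases n <;> decide
  obtain ⟨h₁, h₂⟩ := two_pow_log_le_and_lt (n := n / 2) (by omega)
  rw [Set.mem_Icc, offsetCost_of_ne_zero (by omega), offsetCost_of_ne_zero (by omega),
    log_two_eq_log_div_two_add_one hn, pow_succ]
  split_ifs <;> omega

def xtPotential (a : ℕ) : ℤ :=
  offsetCost (a - 2 ^ Nat.log 2 a) - Nat.log 2 a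

lemma abs_xtPotential_sub_xtPotential_div_two_le {n : ℕ} (hn : 2 ≤ n) :
    |xtPotential n - xtPotential (n / 2)| ≤ 1 := by
  obtain ⟨h₁, h₂⟩ := two_pow_log_le_and_lt (n := n / 2) (by omega)
  have hlog := log_two_eq_log_div_two_add_one hn
  have hoff : (n - 2 ^ Nat.log 2 n) / 2 = n / 2 - 2 ^ Nat.log 2 (n / 2) := by
    rw [hlog, pow_succ]
    omega
  have := Set.mem_Icc.1 (offsetCost_mem_Icc_div_two (n - 2 ^ Nat.log 2 n))
  rw [hoff] at this
  rw [abs_sub_le_iff, xtPotential, xtPotential]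
  rw [hlog] at this ⊢
  push_cast
  omega

lemma abs_xtPotential_succ_sub_xtPotential_le {a : ℕ} (ha : a ≠ 0)
    (h : Nat.log 2 a = Nat.log 2 (a + 1)) : |xtPotential (a + 1) - xtPotential a| ≤ 1 := by
  have h₁ := Nat.pow_log_le_self 2 ha
  have hoff : a + 1 - 2 ^ Nat.log 2 (a + 1) = a - 2 ^ Nat.log 2 a + 1 := by
    rw [← h]
    omega
  have := Set.mem_Icc.1 (offsetCost_succ_mem_Icc (a - 2 ^ Nat.log 2 a))
  rw [abs_sub_le_iff, xtPotential, xtPotential, hoff, ← h]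
  omega

lemma xtPotential_le_of_xtAdjLbl {a b : ℕ} (ha : a ≠ 0) (hb : b ≠ 0) (h : xtAdjLbl a b) :
    xtPotential b ≤ xtPotential a + 1 := by
  have parent {n : ℕ} (hn : 2 ≤ n) :=
    abs_sub_le_iff.1 (abs_xtPotential_sub_xtPotential_div_two_le hn)
  rcases h with (rfl | rfl | rfl | rfl) | ⟨rfl, h⟩ | ⟨rfl, h⟩
  · have := parent (n := 2 * a) (by omega)
    rw [Nat.mul_div_cancel_left _ two_pos] at this
    omega
  · have := parent (n := 2 * a + 1) (by omega)
    rw [Nat.mul_add_div two_pos, Nat.div_eq_of_lt one_lt_two, add_zero] at this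
    omega
  · have := parent (n := 2 * b) (by omega)
    rw [Nat.mul_div_cancel_left _ two_pos] at this
    omega
  · have := parent (n := 2 * b + 1) (by omega)
    rw [Nat.mul_add_div two_pos, Nat.div_eq_of_lt one_lt_two, add_zero] at this
    omega
  · have := abs_sub_le_iff.1 (abs_xtPotential_succ_sub_xtPotential_le ha h)
    omega
  · have := abs_sub_le_iff.1 (abs_xtPotential_succ_sub_xtPotential_le hb h.symm)
    omega

lemma xtPotential_two_pow (m : ℕ) : xtPotential (2 ^ m) = -m := by
  simp [xtPotential, Nat.log_pow, offsetCost]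

lemma xtPotential_two_pow_succ_sub_one {m : ℕ} (hm : 1 ≤ m) :
    xtPotential (2 ^ (m + 1) - 1) = m - 1 := by
  have hpow : 2 ^ m = 2 * 2 ^ (m - 1) := by rw [← pow_succ', Nat.sub_add_cancel hm]
  have hpow' : 2 ^ (m + 1) = 2 * 2 ^ m := pow_succ' 2 m
  have := Nat.one_le_two_pow (n := m - 1)
  have hlog : Nat.log 2 (2 ^ (m + 1) - 1) = m :=
    Nat.log_eq_of_pow_le_of_lt_pow (by omega) (by omega)
  have hlog' : Nat.log 2 (2 ^ m - 1) = m - 1 :=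
    Nat.log_eq_of_pow_le_of_lt_pow (by omega) (by rw [Nat.sub_add_cancel hm]; omega)
  have hoff : 2 ^ (m + 1) - 1 - 2 ^ m = 2 ^ m - 1 := by omega
  rw [xtPotential, hlog, hoff, offsetCost_of_ne_zero (by omega), hlog', if_pos (by omega)]
  omega

lemma xTree_two_mul_sub_three_le_dist {l : ℕ} (hl : 2 ≤ l) (x y : Fin (2 ^ l - 1))
    (hx : x.val + 1 = 2 ^ (l - 1)) (hy : y.val + 1 = 2 ^ l - 1) :
    2 * l - 3 ≤ (xTree l).dist x y := by
  obtain ⟨m, rfl⟩ : ∃ m, l = m + 1 := ⟨l - 1, by omega⟩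
  have := (xTree_preconnected x y).sub_le_dist (φ := fun z => xtPotential (z.val + 1))
    fun a b h => xtPotential_le_of_xtAdjLbl (by omega) (by omega) h
  simp only [hx, hy, xtPotential_two_pow, Nat.add_sub_cancel,
    xtPotential_two_pow_succ_sub_one (by omega : 1 ≤ m)] at this
  omega

namespace SimpleGraph

variable {V W : Type*} {G : SimpleGraph V} {H : SimpleGraph W}

lemma exists_adj_dist_le_two_mul_dist_of_forall_adj (hH : H.Preconnected) {c : V}
    (hc : ∀ v, v ≠ c → G.Adj c v) (f : V ≃ W) {a b : W} (hab : a ≠ b) :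
    ∃ u v, G.Adj u v ∧ H.dist a b ≤ 2 * H.dist (f u) (f v) := by
  have hpos := (hH a b).pos_dist_of_ne hab
  have htri := (hH a (f c)).dist_triangle_left b
  rcases le_total (H.dist a (f c)) (H.dist (f c) b) with h | h
  · refine ⟨c, f.symm b, hc _ fun hbc => ?_, by rw [f.apply_symm_apply]; omega⟩
    rw [← hbc, f.apply_symm_apply, dist_self] at h
    omega
  · refine ⟨c, f.symm a, hc _ fun hac => ?_,
      by rw [f.apply_symm_apply, dist_comm (u := f c)]; omega⟩
    rw [← hac, f.apply_symm_apply, dist_self] at h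
    omega

end SimpleGraph

lemma exists_wheelGraph_adj_le_xTree_dist {l : ℕ} (hl : 2 ≤ l)
    (f : Fin (2 ^ l - 1) ≃ Fin (2 ^ l - 1)) :
    ∃ u v, (wheelGraph (2 ^ l - 1)).Adj u v ∧ l - 1 ≤ (xTree l).dist (f u) (f v) := by
  have hpow : 2 ^ l = 2 * 2 ^ (l - 1) := by rw [← pow_succ', Nat.sub_add_cancel (by omega)]
  have := Nat.one_lt_two_pow (n := l - 1) (by omega)
  let leftLeaf : Fin (2 ^ l - 1) := ⟨2 ^ (l - 1) - 1, by omega⟩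
  let rightLeaf : Fin (2 ^ l - 1) := ⟨2 ^ l - 2, by omega⟩
  have hne : leftLeaf ≠ rightLeaf := fun h => by
    have := congrArg Fin.val h
    simp only [leftLeaf, rightLeaf] at this
    omega
  obtain ⟨u, v, huv, hdist⟩ := exists_adj_dist_le_two_mul_dist_of_forall_adj xTree_preconnected
    (G := wheelGraph _) (c := ⟨0, by omega⟩) (fun _ hv => ⟨hv.symm, .inl rfl⟩) f hne
  refine ⟨u, v, huv, ?_⟩
  have := xTree_two_mul_sub_three_le_dist hl leftLeaf rightLeaf
    (by simp only [leftLeaf]; omega) (by simp only [rightLeaf]; omega)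
  omega

/- The boustrophedon order of the labels: level `m` (labels `2 ^ m ≤ s < 2 ^ (m + 1)`) is read
backwards when `m` is even, so that consecutive labels are sent to adjacent vertices of `XT_l`. -/
def snake (s : ℕ) : ℕ :=
  if Nat.log 2 s % 2 = 1 then s else 3 * 2 ^ Nat.log 2 s - 1 - s

lemma snake_of_odd {s : ℕ} (h : Nat.log 2 s % 2 = 1) : snake s = s :=
  if_pos h

lemma snake_of_even {s : ℕ} (h : Nat.log 2 s % 2 = 0) : snake s = 3 * 2 ^ Nat.log 2 s - 1 - s :=
  if_neg (by omega)

lemma snake_one : snake 1 = 1 := by decide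

lemma snake_two : snake 2 = 2 := by decide

lemma two_pow_log_le_snake_and_lt {s : ℕ} (hs : s ≠ 0) :
    2 ^ Nat.log 2 s ≤ snake s ∧ snake s < 2 * 2 ^ Nat.log 2 s := by
  have := two_pow_log_le_and_lt hs
  unfold snake
  split_ifs <;> omega

lemma log_snake {s : ℕ} (hs : s ≠ 0) : Nat.log 2 (snake s) = Nat.log 2 s := by
  obtain ⟨h₁, h₂⟩ := two_pow_log_le_snake_and_lt hs
  exact Nat.log_eq_of_pow_le_of_lt_pow h₁ (by rwa [pow_succ'])

lemma snake_snake {s : ℕ} (hs : s ≠ 0) : snake (snake s) = s := by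
  have := two_pow_log_le_and_lt hs
  rcases Nat.mod_two_eq_zero_or_one (Nat.log 2 s) with h | h
  · rw [snake_of_even (by rwa [log_snake hs]), log_snake hs, snake_of_even h]
    omega
  · rw [snake_of_odd h, snake_of_odd h]

lemma xtAdjLbl_snake_succ {s : ℕ} (hs : s ≠ 0) : xtAdjLbl (snake s) (snake (s + 1)) := by
  obtain ⟨h₁, h₂⟩ := two_pow_log_le_and_lt hs
  rcases Nat.lt_or_ge (s + 1) (2 * 2 ^ Nat.log 2 s) with h | h
  · have hlog : Nat.log 2 (s + 1) = Nat.log 2 s :=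
      Nat.log_eq_of_pow_le_of_lt_pow (by omega) (by rwa [pow_succ'])
    have hlevel : Nat.log 2 (snake s) = Nat.log 2 (snake (s + 1)) := by
      rw [log_snake hs, log_snake (by omega), hlog]
    rcases Nat.mod_two_eq_zero_or_one (Nat.log 2 s) with hm | hm
    · rw [snake_of_even hm, snake_of_even (by rwa [hlog]), hlog] at hlevel ⊢
      exact .inr (.inr ⟨by omega, hlevel⟩)
    · rw [snake_of_odd hm, snake_of_odd (by rwa [hlog])] at hlevel ⊢
      exact .inr (.inl ⟨rfl, hlevel⟩)
  · have hlog : Nat.log 2 (s + 1) = Nat.log 2 s + 1 := by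
      rw [show s + 1 = 2 ^ (Nat.log 2 s + 1) by rw [pow_succ']; omega, Nat.log_pow one_lt_two]
    rcases Nat.mod_two_eq_zero_or_one (Nat.log 2 s) with hm | hm
    · rw [snake_of_even hm, snake_of_odd (by omega)]
      exact .inl (.inl (by omega))
    · rw [snake_of_odd hm, snake_of_even (by omega), hlog, pow_succ]
      exact .inl (.inr (.inl (by omega)))

section SnakeEquiv

variable (l : ℕ)

def snakeFun (x : Fin (2 ^ l - 1)) : Fin (2 ^ l - 1) :=
  ⟨snake (x.val + 1) - 1, by
    have := two_pow_log_le_snake_and_lt (s := x.val + 1) (by omega)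
    have := Nat.pow_le_pow_right two_pos (log_succ_val_lt x)
    rw [pow_succ'] at this
    omega⟩

variable {l}

lemma snakeFun_val_succ (x : Fin (2 ^ l - 1)) : (snakeFun l x).val + 1 = snake (x.val + 1) := by
  have := two_pow_log_le_snake_and_lt (s := x.val + 1) (by omega)
  have := Nat.one_le_two_pow (n := Nat.log 2 (x.val + 1))
  simp only [snakeFun]
  omega

lemma snakeFun_involutive : Function.Involutive (snakeFun l) := fun x =>
  Fin.ext <| by
    have := snakeFun_val_succ (snakeFun l x)
    rw [snakeFun_val_succ x, snake_snake (by omega)] at this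
    omega

variable (l)

def snakeEquiv : Equiv.Perm (Fin (2 ^ l - 1)) :=
  snakeFun_involutive.toPerm _

variable {l}

lemma snakeEquiv_val_succ (x : Fin (2 ^ l - 1)) :
    (snakeEquiv l x).val + 1 = snake (x.val + 1) :=
  snakeFun_val_succ x

lemma snakeEquiv_val_eq_zero {x : Fin (2 ^ l - 1)} (hx : x.val = 0) : (snakeEquiv l x).val = 0 := by
  have := snakeEquiv_val_succ x
  rw [hx, snake_one] at this
  omega

lemma snakeEquiv_val_eq_one {x : Fin (2 ^ l - 1)} (hx : x.val = 1) : (snakeEquiv l x).val = 1 := by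
  have := snakeEquiv_val_succ x
  rw [hx, snake_two] at this
  omega

lemma snakeEquiv_val_ne_zero {x : Fin (2 ^ l - 1)} (hx : x.val ≠ 0) :
    (snakeEquiv l x).val ≠ 0 := by
  have := snakeEquiv_val_succ x
  have := (two_pow_log_le_snake_and_lt (s := x.val + 1) (by omega)).1
  have := Nat.one_lt_two_pow (Nat.log_pos one_lt_two (by omega : 2 ≤ x.val + 1)).ne'
  omega

lemma xTree_adj_snakeEquiv_of_val_eq_succ {u v : Fin (2 ^ l - 1)} (h : v.val = u.val + 1) :
    (xTree l).Adj (snakeEquiv l u) (snakeEquiv l v) := by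
  change xtAdjLbl _ _
  rw [snakeEquiv_val_succ, snakeEquiv_val_succ, h]
  exact xtAdjLbl_snake_succ (by omega)

lemma xTree_dist_snakeEquiv_le_of_wheelGraph_adj {u v : Fin (2 ^ l - 1)} (hl : 2 ≤ l)
    (h : (wheelGraph (2 ^ l - 1)).Adj u v) :
    (xTree l).dist (snakeEquiv l u) (snakeEquiv l v) ≤ l - 1 := by
  obtain ⟨-, hu | hv | h | h | ⟨hu, hv⟩ | ⟨hv, hu⟩⟩ := h
  · rw [dist_comm]
    exact xTree_dist_le_of_val_eq_zero _ _ (snakeEquiv_val_eq_zero hu)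
  · exact xTree_dist_le_of_val_eq_zero _ _ (snakeEquiv_val_eq_zero hv)
  · rw [dist_eq_one_iff_adj.2 (xTree_adj_snakeEquiv_of_val_eq_succ h)]
    omega
  · rw [dist_comm, dist_eq_one_iff_adj.2 (xTree_adj_snakeEquiv_of_val_eq_succ h)]
    omega
  · rw [dist_comm]
    exact xTree_dist_le_of_val_eq_one _ _ (snakeEquiv_val_ne_zero (by omega))
      (snakeEquiv_val_eq_one hu)
  · exact xTree_dist_le_of_val_eq_one _ _ (snakeEquiv_val_ne_zero (by omega))
      (snakeEquiv_val_eq_one hv)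

end SnakeEquiv

theorem dil_wheel_xTree (l n : ℕ) (hl : 3 ≤ l) (hn : n = 2 ^ l - 1) :
    (∀ f : Fin n ≃ Fin (2 ^ l - 1), ∃ u v : Fin n, (wheelGraph n).Adj u v ∧
      l - 1 ≤ (xTree l).dist (f u) (f v)) ∧
    (∃ f : Fin n ≃ Fin (2 ^ l - 1), ∀ u v : Fin n, (wheelGraph n).Adj u v →
      (xTree l).dist (f u) (f v) ≤ l - 1) := by
  subst hn
  exact ⟨exists_wheelGraph_adj_le_xTree_dist (by omega),
    snakeEquiv l, fun _ _ h => xTree_dist_snakeEquiv_le_of_wheelGraph_adj (by omega) h⟩
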